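/- arXiv:2112.15002 — 2 statements merged into one kernel-verified Lean document; each statement's English description precedes it below -/
import Mathlib

section
/- Let d ≥ 1, let G ∈ M_d(ℂ) be a Hermitian unitary matrix, let O ∈ M_d(ℂ) be Hermitian, and let ρ ∈ M_d(ℂ) be a density matrix. With W(θ) = exp(−iθG), O₁ = (O + G·O·G)/2, and O₂ = (O − G·O·G)/2, for every θ ∈ ℝ one has Tr[O·W(θ)·ρ·W(θ)†] = Tr[O₁ρ] + cos(2θ)·Tr[O₂ρ] − sin(2θ)·Tr[iO₂Gρ]. -/
open Matrix MeasureTheory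
open scoped ComplexOrder

noncomputable section

/-- The rotation `W(θ) = exp(−iθG)` generated by a matrix `G`. -/
def Wrot {d : ℕ} (G : Matrix (Fin d) (Fin d) ℂ) (θ : ℝ) : Matrix (Fin d) (Fin d) ℂ :=
  NormedSpace.exp ((-(Complex.I * (θ : ℂ))) • G)

/-- The commuting part `O₁ = (O + G·O·G)/2` of `O` with respect to `G`. -/
def Opart1 {d : ℕ} (G O : Matrix (Fin d) (Fin d) ℂ) : Matrix (Fin d) (Fin d) ℂ :=
  (2⁻¹ : ℂ) • (O + G * O * G)

/-- The anticommuting part `O₂ = (O − G·O·G)/2` of `O` with respect to `G`. -/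
def Opart2 {d : ℕ} (G O : Matrix (Fin d) (Fin d) ℂ) : Matrix (Fin d) (Fin d) ℂ :=
  (2⁻¹ : ℂ) • (O - G * O * G)

/-!
Since `G² = 1`, the rotation is `W(θ) = exp(−iθG) = cos θ − i sin θ · G`. Expanding the
conjugated observable, `W†OW = cos²θ · O + sin²θ · GOG + i sin θ cos θ · (GO − OG)
= O₁ + cos 2θ · O₂ − sin 2θ · iO₂G`, and the claim follows from cyclicity of the trace.
-/

theorem NormedSpace.exp_smul_of_mul_self_eq_one {A : Type*} [NormedRing A] [NormedAlgebra ℂ A]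
    {g : A} (hg : g * g = 1) (c : ℂ) :
    exp (c • g) = Complex.cosh c • (1 : A) + Complex.sinh c • g := by
  set p : A := (2⁻¹ : ℂ) • (1 + g)
  set q : A := (2⁻¹ : ℂ) • (1 - g)
  -- `p` and `q` are orthogonal idempotents with `p + q = 1`, so `φ` is multiplicative
  let φ : (ℂ × ℂ) →ₐ[ℂ] A :=
    { toFun := fun x => x.1 • p + x.2 • q
      map_one' := by simp only [p, q, Prod.fst_one, Prod.snd_one, one_smul]; module
      map_mul' := fun x y => by
        simp only [p, q, Prod.fst_mul, Prod.snd_mul, add_mul, mul_add, smul_mul_smul_comm,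
          mul_one, one_mul, sub_mul, mul_sub, hg]
        module
      map_zero' := by simp
      map_add' := fun x y => by simp only [Prod.fst_add, Prod.snd_add, add_smul]; abel
      commutes' := fun a => by
        simp only [Algebra.algebraMap_eq_smul_one, Prod.smul_fst, Prod.smul_snd, Prod.fst_one,
          Prod.snd_one, p, q]
        module }
  have hφ : Continuous φ := by
    show Continuous fun x : ℂ × ℂ => x.1 • p + x.2 • q
    fun_prop
  have hcg : c • g = φ (c, -c) := by
    show c • g = c • p + (-c) • q
    simp only [p, q]; module
  have hexp : exp ((c, -c) : ℂ × ℂ) = (Complex.exp c, Complex.exp (-c)) := by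
    ext
    · rw [Prod.fst_exp, Complex.exp_eq_exp_ℂ]
    · rw [Prod.snd_exp, Complex.exp_eq_exp_ℂ]
  rw [hcg, ← map_exp_of_mem_ball (𝕂 := ℂ) φ hφ _
    ((expSeries_radius_eq_top ℂ (ℂ × ℂ)).symm ▸ edist_lt_top _ _), hexp]
  show Complex.exp c • p + Complex.exp (-c) • q = _
  simp only [p, q, Complex.cosh, Complex.sinh]
  module

section Rotation

variable {d : ℕ} {G : Matrix (Fin d) (Fin d) ℂ}

open Complex

theorem Wrot_eq (hG : G * G = 1) (θ : ℝ) :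
    Wrot G θ = (Real.cos θ : ℂ) • (1 : Matrix (Fin d) (Fin d) ℂ) - (I * Real.sin θ) • G := by
  -- `exp` only depends on the topology, so any normed algebra structure on matrices will do
  let := Matrix.linftyOpNormedRing (n := Fin d) (α := ℂ)
  let := Matrix.linftyOpNormedAlgebra (n := Fin d) (R := ℂ) (α := ℂ)
  refine (NormedSpace.exp_smul_of_mul_self_eq_one hG _).trans ?_
  rw [cosh_neg, sinh_neg, mul_comm I, cosh_mul_I, sinh_mul_I, ← ofReal_cos, ← ofReal_sin, neg_smul, sub_eq_add_neg, mul_comm]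

theorem conjTranspose_Wrot (hGh : G.IsHermitian) (hG : G * G = 1) (θ : ℝ) :
    (Wrot G θ)ᴴ = (Real.cos θ : ℂ) • (1 : Matrix (Fin d) (Fin d) ℂ) + (I * Real.sin θ) • G := by
  rw [Wrot_eq hG, conjTranspose_sub, conjTranspose_smul, conjTranspose_smul, conjTranspose_one,
    hGh.eq, star_mul', Complex.star_def, conj_ofReal, conj_ofReal, conj_I,
    neg_mul, neg_smul, sub_neg_eq_add]

theorem conjTranspose_Wrot_mul_mul_Wrot (hGh : G.IsHermitian) (hG : G * G = 1)
    (O : Matrix (Fin d) (Fin d) ℂ) (θ : ℝ) :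
    (Wrot G θ)ᴴ * O * Wrot G θ = Opart1 G O + (Real.cos (2 * θ) : ℂ) • Opart2 G O
      - (Real.sin (2 * θ) : ℂ) • (I • (Opart2 G O * G)) := by
  have hcs : (Real.cos θ : ℂ) ^ 2 + (Real.sin θ : ℂ) ^ 2 = 1 := by
    exact_mod_cast Real.cos_sq_add_sin_sq θ
  rw [conjTranspose_Wrot hGh hG, Wrot_eq hG, Opart1, Opart2, Real.cos_two_mul, Real.sin_two_mul]
  simp only [Matrix.add_mul, Matrix.mul_sub, Matrix.sub_mul, Matrix.smul_mul, Matrix.mul_smul,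
    Matrix.mul_one, Matrix.one_mul, Matrix.mul_assoc, hG, ofReal_mul, ofReal_sub, ofReal_pow,
    ofReal_ofNat, ofReal_one]
  linear_combination (norm := module) (hcs - (Real.sin θ : ℂ) ^ 2 * I_sq) • (G * (O * G))

theorem trace_mul_Wrot_conj (hGh : G.IsHermitian) (hG : G * G = 1)
    (O ρ : Matrix (Fin d) (Fin d) ℂ) (θ : ℝ) :
    (O * (Wrot G θ * ρ * (Wrot G θ)ᴴ)).trace = (Opart1 G O * ρ).trace
      + Real.cos (2 * θ) * (Opart2 G O * ρ).trace
      - Real.sin (2 * θ) * ((I • (Opart2 G O * G)) * ρ).trace := by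
  rw [← Matrix.mul_assoc, trace_mul_cycle, ← Matrix.mul_assoc,
    conjTranspose_Wrot_mul_mul_Wrot hGh hG]
  simp only [Matrix.add_mul, Matrix.sub_mul, Matrix.smul_mul, trace_add, trace_sub, trace_smul,
    smul_eq_mul]

end Rotation

theorem trace_rotation_expansion_general
    (d : ℕ)
    (G O : Matrix (Fin d) (Fin d) ℂ)
    (hGherm : G.IsHermitian) (hGunit : G * G = 1)
    (ρ : Matrix (Fin d) (Fin d) ℂ)
    (θ : ℝ) :
    ((O * (Wrot G θ * ρ * (Wrot G θ)ᴴ)).trace.re)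
      = ((Opart1 G O * ρ).trace.re)
        + Real.cos (2 * θ) * ((Opart2 G O * ρ).trace.re)
        - Real.sin (2 * θ) * (((Complex.I • (Opart2 G O * G)) * ρ).trace.re) := by
  rw [trace_mul_Wrot_conj hGherm hGunit, Complex.sub_re, Complex.add_re, Complex.re_ofReal_mul,
    Complex.re_ofReal_mul]

/-- Pointwise expansion of the rotated expectation value: with `W(θ) = exp(−iθG)`,
`O₁ = (O + GOG)/2` and `O₂ = (O − GOG)/2`, one has
`Tr[O W ρ W†] = Tr[O₁ρ] + cos(2θ)·Tr[O₂ρ] − sin(2θ)·Tr[iO₂Gρ]`. -/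
theorem trace_rotation_expansion
    (d : ℕ) (hd : 1 ≤ d)
    (G O : Matrix (Fin d) (Fin d) ℂ)
    (hGherm : G.IsHermitian) (hGunit : G * G = 1) (hO : O.IsHermitian)
    (ρ : Matrix (Fin d) (Fin d) ℂ) (hρ : ρ.PosSemidef) (hρtr : ρ.trace = 1)
    (θ : ℝ) :
    ((O * (Wrot G θ * ρ * (Wrot G θ)ᴴ)).trace.re)
      = ((Opart1 G O * ρ).trace.re)
        + Real.cos (2 * θ) * ((Opart2 G O * ρ).trace.re)
        - Real.sin (2 * θ) * (((Complex.I • (Opart2 G O * G)) * ρ).trace.re) :=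
  trace_rotation_expansion_general d G O hGherm hGunit ρ θ
end
end

section
/- Let d ≥ 1, let G ∈ M_d(ℂ) be a Hermitian unitary matrix, let O ∈ M_d(ℂ) be Hermitian, and let ρ ∈ M_d(ℂ) be a density matrix. With W_±(θ) = exp(−i(θ ± π/4)G) and O₂ = (O − G·O·G)/2, for every θ ∈ ℝ one has Tr[O·W₊(θ)·ρ·W₊(θ)†] − Tr[O·W₋(θ)·ρ·W₋(θ)†] = −2·sin(2θ)·Tr[O₂ρ] − 2·cos(2θ)·Tr[iO₂Gρ]. -/
/-! Since `G² = 1`, `exp(−itG) = cos t − i sin t · G`, so in the Heisenberg picture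
`W(t)† O W(t) = O₁ + cos 2t · O₂ − sin 2t · iO₂G`: only the part `O₂` anticommuting with `G`
rotates, at frequency `2`. The shifts `t = θ ± π/4` turn `cos 2t` into `∓ sin 2θ` and `sin 2t`
into `± cos 2θ`, so `O₁` cancels in the difference. -/

open Matrix MeasureTheory
open scoped ComplexOrder

noncomputable section

theorem NormedSpace.exp_smul_of_mul_self_eq_one_s7 {A : Type*} [Ring A] [Algebra ℂ A]
    [TopologicalSpace A] [IsTopologicalRing A] [ContinuousSMul ℂ A] [T2Space A]
    {a : A} (ha : a * a = 1) (z : ℂ) :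
    NormedSpace.exp (z • a) = Complex.cosh z • 1 + Complex.sinh z • a := by
  have ha_even : ∀ k : ℕ, a ^ (2 * k) = 1 := fun k => by rw [pow_mul, sq, ha, one_pow]
  have ha_odd : ∀ k : ℕ, a ^ (2 * k + 1) = a := fun k => by rw [pow_succ, ha_even, one_mul]
  rw [NormedSpace.exp_eq_tsum ℂ]
  refine HasSum.tsum_eq (HasSum.even_add_odd ?_ ?_)
  · convert (Complex.hasSum_cosh z).smul_const (1 : A) using 2 with k
    rw [smul_pow, ha_even, smul_smul, div_eq_inv_mul]
  · convert (Complex.hasSum_sinh z).smul_const a using 2 with k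
    rw [smul_pow, ha_odd, smul_smul, div_eq_inv_mul]

section

variable {d : ℕ} {G : Matrix (Fin d) (Fin d) ℂ}

theorem Wrot_eq_cos_sub_sin (hG : G * G = 1) (t : ℝ) :
    Wrot G t = (Real.cos t : ℂ) • 1 - (Complex.I * Real.sin t) • G := by
  rw [Wrot, NormedSpace.exp_smul_of_mul_self_eq_one_s7 hG,
    show -(Complex.I * t) = (-t : ℂ) * Complex.I by ring, Complex.cosh_mul_I, Complex.sinh_mul_I,
    Complex.cos_neg, Complex.sin_neg, Complex.ofReal_cos, Complex.ofReal_sin]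
  module

theorem conjTranspose_Wrot_s7 (hG : G.IsHermitian) (t : ℝ) : (Wrot G t)ᴴ = Wrot G (-t) := by
  rw [Wrot, Wrot, ← Matrix.exp_conjTranspose, conjTranspose_smul, hG.eq]
  congr 2
  simp [Complex.conj_ofReal]

theorem Wrot_neg_mul_mul_Wrot (hG : G * G = 1) (O : Matrix (Fin d) (Fin d) ℂ) (t : ℝ) :
    Wrot G (-t) * O * Wrot G t
      = Opart1 G O + Real.cos (2 * t) • Opart2 G O
        - Real.sin (2 * t) • (Complex.I • (Opart2 G O * G)) := by
  have hGOGG : G * O * G * G = G * O := by rw [mul_assoc _ G G, hG, mul_one]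
  rw [Wrot_eq_cos_sub_sin hG, Wrot_eq_cos_sub_sin hG, Real.cos_neg, Real.sin_neg, Opart1, Opart2,
    Real.sin_two_mul, Real.cos_two_mul]
  simp only [sub_mul, mul_sub, smul_mul_assoc, mul_smul_comm, one_mul, mul_one,
    hGOGG, smul_add, smul_sub]
  match_scalars <;> simp only [Complex.coe_algebraMap, Complex.ofReal_cos, Complex.ofReal_sin]
  · ring
  · ring
  · ring
  · linear_combination -Complex.sin t ^ 2 * Complex.I_sq + Complex.sin_sq_add_cos_sq (t : ℂ)

theorem Wrot_shifted_difference (hG : G * G = 1) (O : Matrix (Fin d) (Fin d) ℂ) (θ : ℝ) :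
    Wrot G (-(θ + Real.pi / 4)) * O * Wrot G (θ + Real.pi / 4)
        - Wrot G (-(θ - Real.pi / 4)) * O * Wrot G (θ - Real.pi / 4)
      = (-2 * Real.sin (2 * θ)) • Opart2 G O
        - (2 * Real.cos (2 * θ)) • (Complex.I • (Opart2 G O * G)) := by
  rw [Wrot_neg_mul_mul_Wrot hG, Wrot_neg_mul_mul_Wrot hG,
    show 2 * (θ + Real.pi / 4) = 2 * θ + Real.pi / 2 by ring,
    show 2 * (θ - Real.pi / 4) = 2 * θ - Real.pi / 2 by ring, Real.cos_add_pi_div_two,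
    Real.sin_add_pi_div_two, Real.cos_sub_pi_div_two, Real.sin_sub_pi_div_two]
  module

end

theorem trace_mul_mul_mul_cycle {n R : Type*} [Fintype n] [CommSemiring R]
    (O W ρ V : Matrix n n R) :
    (O * (W * ρ * V)).trace = (V * O * W * ρ).trace := by
  rw [← Matrix.mul_assoc, trace_mul_comm, Matrix.mul_assoc, Matrix.mul_assoc]

theorem trace_shifted_difference_general
    (d : ℕ)
    (G O : Matrix (Fin d) (Fin d) ℂ)
    (hGherm : G.IsHermitian) (hGunit : G * G = 1)
    (ρ : Matrix (Fin d) (Fin d) ℂ)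
    (θ : ℝ) :
    ((O * (Wrot G (θ + Real.pi / 4) * ρ * (Wrot G (θ + Real.pi / 4))ᴴ)).trace.re)
      - ((O * (Wrot G (θ - Real.pi / 4) * ρ * (Wrot G (θ - Real.pi / 4))ᴴ)).trace.re)
      = -2 * Real.sin (2 * θ) * ((Opart2 G O * ρ).trace.re)
        - 2 * Real.cos (2 * θ) * (((Complex.I • (Opart2 G O * G)) * ρ).trace.re) := by
  rw [conjTranspose_Wrot_s7 hGherm, conjTranspose_Wrot_s7 hGherm, trace_mul_mul_mul_cycle,
    trace_mul_mul_mul_cycle, ← Complex.sub_re, ← trace_sub, ← Matrix.sub_mul,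
    Wrot_shifted_difference hGunit]
  simp only [Matrix.sub_mul, smul_mul_assoc, trace_sub, trace_smul, Complex.sub_re,
    Complex.smul_re, smul_eq_mul]

/-- Pointwise shifted-difference formula: with `W_±(θ) = exp(−i(θ ± π/4)G)` and
`O₂ = (O − GOG)/2`, one has
`Tr[O W₊ ρ W₊†] − Tr[O W₋ ρ W₋†] = −2sin(2θ)·Tr[O₂ρ] − 2cos(2θ)·Tr[iO₂Gρ]`. -/
theorem trace_shifted_difference
    (d : ℕ) (hd : 1 ≤ d)
    (G O : Matrix (Fin d) (Fin d) ℂ)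
    (hGherm : G.IsHermitian) (hGunit : G * G = 1) (hO : O.IsHermitian)
    (ρ : Matrix (Fin d) (Fin d) ℂ) (hρ : ρ.PosSemidef) (hρtr : ρ.trace = 1)
    (θ : ℝ) :
    ((O * (Wrot G (θ + Real.pi / 4) * ρ * (Wrot G (θ + Real.pi / 4))ᴴ)).trace.re)
      - ((O * (Wrot G (θ - Real.pi / 4) * ρ * (Wrot G (θ - Real.pi / 4))ᴴ)).trace.re)
      = -2 * Real.sin (2 * θ) * ((Opart2 G O * ρ).trace.re)
        - 2 * Real.cos (2 * θ) * (((Complex.I • (Opart2 G O * G)) * ρ).trace.re) :=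
  trace_shifted_difference_general d G O hGherm hGunit ρ θ
end
end
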